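/- In λ¢ with the coin rule replaced by the deterministic rule coin → 0 ⊕_{1/2} 1 (internalising the probability distribution as a term former ⊕_p), the resulting rewrite system is confluent. -/

import Mathlib

/-- Terms of λ¢ extended with a superposition constructor `sup p t r`
    (written t ⊕_p r), internalising probability distributions. -/
inductive Tm2 : Type
  | var : Nat → Tm2
  | lam : Tm2 → Tm2
  | app : Tm2 → Tm2 → Tm2
  | one : Tm2
  | zero : Tm2
  | ite : Tm2 → Tm2 → Tm2 → Tm2
  | coin : Tm2
  | sup : ℚ → Tm2 → Tm2 → Tm2
  deriving DecidableEq

def lift2 (d : Nat) : Tm2 → Tm2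
  | .var n => if n < d then .var n else .var (n+1)
  | .lam t => .lam (lift2 (d+1) t)
  | .app t u => .app (lift2 d t) (lift2 d u)
  | .one => .one
  | .zero => .zero
  | .ite c a b => .ite (lift2 d c) (lift2 d a) (lift2 d b)
  | .coin => .coin
  | .sup p t u => .sup p (lift2 d t) (lift2 d u)

def subst2 : Tm2 → Nat → Tm2 → Tm2
  | .var n, k, s => if n = k then s else if k < n then .var (n-1) else .var n
  | .lam t, k, s => .lam (subst2 t (k+1) (lift2 0 s))
  | .app t u, k, s => .app (subst2 t k s) (subst2 u k s)
  | .one, _, _ => .one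
  | .zero, _, _ => .zero
  | .ite c a b, k, s => .ite (subst2 c k s) (subst2 a k s) (subst2 b k s)
  | .coin, _, _ => .coin
  | .sup p t u, k, s => .sup p (subst2 t k s) (subst2 u k s)

/-- Deterministic reduction: as in λ¢, but the coin deterministically
    reduces to its distribution 0 ⊕_{1/2} 1; closed under all contexts,
    including both components of ⊕. -/
inductive Step2 : Tm2 → Tm2 → Prop
  | beta (t r) : Step2 (.app (.lam t) r) (subst2 t 0 r)
  | iteOne (a b) : Step2 (.ite .one a b) a
  | iteZero (a b) : Step2 (.ite .zero a b) b
  | coin : Step2 .coin (.sup (1/2) .zero .one)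
  | lam {t t'} : Step2 t t' → Step2 (.lam t) (.lam t')
  | appL {t t'} (u) : Step2 t t' → Step2 (.app t u) (.app t' u)
  | appR {u u'} (t) : Step2 u u' → Step2 (.app t u) (.app t u')
  | iteC {c c'} (a b) : Step2 c c' → Step2 (.ite c a b) (.ite c' a b)
  | iteA {a a'} (c b) : Step2 a a' → Step2 (.ite c a b) (.ite c a' b)
  | iteB {b b'} (c a) : Step2 b b' → Step2 (.ite c a b) (.ite c a b')
  | supL {t t'} (p u) : Step2 t t' → Step2 (.sup p t u) (.sup p t' u)
  | supR {u u'} (p t) : Step2 u u' → Step2 (.sup p t u) (.sup p t u')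

/-! Tait–Martin-Löf's method with Takahashi's complete development. The coin is a constant with
a single contractum and `t ⊕_p r` is one more inert constructor, so no rule overlaps another and
parallel reduction `Par` (contract any set of redexes of a term at once) has the triangle
property: if `Par t s` then `Par s (dev t)`, where `dev t` contracts every redex of `t`. Hence
`Par` has the diamond property, and since `Step2 ⊆ Par ⊆ Step2*`, the reflexive-transitive
closures of `Par` and `Step2` coincide and `Step2` is confluent. -/

open Relation

theorem lift2_lift2_of_le (t : Tm2) {i j : ℕ} (h : i ≤ j) :
    lift2 i (lift2 j t) = lift2 (j + 1) (lift2 i t) := by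
  induction t generalizing i j with
  | var n => grind [lift2]
  | lam t ih => simp [lift2, ih (Nat.succ_le_succ h)]
  | _ => simp_all [lift2]

theorem lift2_subst2_of_le (t s : Tm2) {d k : ℕ} (h : d ≤ k) :
    lift2 d (subst2 t k s) = subst2 (lift2 d t) (k + 1) (lift2 d s) := by
  induction t generalizing d k s with
  | var n => grind [lift2, subst2]
  | lam t ih =>
    simp [lift2, subst2, ih _ (Nat.succ_le_succ h), lift2_lift2_of_le s (Nat.zero_le d)]
  | _ => simp_all [lift2, subst2]

theorem lift2_subst2_of_ge (t s : Tm2) {d k : ℕ} (h : k ≤ d) :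
    lift2 d (subst2 t k s) = subst2 (lift2 (d + 1) t) k (lift2 d s) := by
  induction t generalizing d k s with
  | var n => grind [lift2, subst2]
  | lam t ih =>
    simp [lift2, subst2, ih _ (Nat.succ_le_succ h), lift2_lift2_of_le s (Nat.zero_le d)]
  | _ => simp_all [lift2, subst2]

@[simp]
theorem subst2_lift2 (t s : Tm2) (k : ℕ) : subst2 (lift2 k t) k s = t := by
  induction t generalizing k s with
  | var n => grind [lift2, subst2]
  | _ => simp_all [lift2, subst2]

theorem subst2_subst2 (t u s : Tm2) {j k : ℕ} (h : j ≤ k) :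
    subst2 (subst2 t j u) k s = subst2 (subst2 t (k + 1) (lift2 j s)) j (subst2 u k s) := by
  induction t generalizing j k u s with
  | var n =>
    by_cases hj : n = j
    · subst hj
      simp [subst2, show ¬n = k + 1 by omega, show ¬k + 1 < n by omega]
    · by_cases hk : n = k + 1
      · subst hk
        simp [subst2, hj, show j < k + 1 by omega]
      · grind [subst2]
  | lam t ih =>
    simp [subst2, ih _ _ (Nat.succ_le_succ h), lift2_lift2_of_le s (Nat.zero_le j),
      lift2_subst2_of_le u s (Nat.zero_le k)]
  | _ => simp_all [subst2]

namespace Tm2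

inductive Par : Tm2 → Tm2 → Prop
  | var (n) : Par (.var n) (.var n)
  | one : Par .one .one
  | zero : Par .zero .zero
  | coin : Par .coin .coin
  | coinStep : Par .coin (.sup (1/2) .zero .one)
  | lam {t t'} : Par t t' → Par (.lam t) (.lam t')
  | app {t t' u u'} : Par t t' → Par u u' → Par (.app t u) (.app t' u')
  | ite {c c' a a' b b'} : Par c c' → Par a a' → Par b b' → Par (.ite c a b) (.ite c' a' b')
  | sup {t t' u u'} (p) : Par t t' → Par u u' → Par (.sup p t u) (.sup p t' u')
  | beta {t t' u u'} : Par t t' → Par u u' → Par (.app (.lam t) u) (subst2 t' 0 u')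
  | iteOne {a a'} (b) : Par a a' → Par (.ite .one a b) a'
  | iteZero {b b'} (a) : Par b b' → Par (.ite .zero a b) b'

def dev : Tm2 → Tm2
  | .var n => .var n
  | .lam t => .lam (dev t)
  | .app (.lam t) u => subst2 (dev t) 0 (dev u)
  | .app t u => .app (dev t) (dev u)
  | .one => .one
  | .zero => .zero
  | .ite .one a _ => dev a
  | .ite .zero _ b => dev b
  | .ite c a b => .ite (dev c) (dev a) (dev b)
  | .coin => .sup (1/2) .zero .one
  | .sup p t u => .sup p (dev t) (dev u)

namespace Par

theorem refl : ∀ t, Par t t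
  | .var n => .var n
  | .lam t => .lam (refl t)
  | .app t u => .app (refl t) (refl u)
  | .one => .one
  | .zero => .zero
  | .ite c a b => .ite (refl c) (refl a) (refl b)
  | .coin => .coin
  | .sup p t u => .sup p (refl t) (refl u)

theorem lift2 {t t'} (h : Par t t') (d : ℕ) : Par (lift2 d t) (lift2 d t') := by
  induction h generalizing d with
  | var n => simp only [_root_.lift2]; split <;> exact .var _
  | one => exact .one
  | zero => exact .zero
  | coin => exact .coin
  | coinStep => exact .coinStep
  | lam _ ih => exact .lam (ih (d + 1))
  | app _ _ iht ihu => exact .app (iht d) (ihu d)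
  | ite _ _ _ ihc iha ihb => exact .ite (ihc d) (iha d) (ihb d)
  | sup p _ _ iht ihu => exact .sup p (iht d) (ihu d)
  | beta _ _ iht ihu =>
    rw [lift2_subst2_of_ge _ _ (Nat.zero_le d)]
    exact .beta (iht (d + 1)) (ihu d)
  | iteOne b _ ih => exact .iteOne _ (ih d)
  | iteZero a _ ih => exact .iteZero _ (ih d)

theorem subst2 {t t' s s'} (ht : Par t t') (hs : Par s s') (k : ℕ) :
    Par (subst2 t k s) (subst2 t' k s') := by
  induction ht generalizing k s s' with
  | var n =>
    simp only [_root_.subst2]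
    split_ifs
    exacts [hs, .var _, .var _]
  | one => exact .one
  | zero => exact .zero
  | coin => exact .coin
  | coinStep => exact .coinStep
  | lam _ ih => exact .lam (ih (hs.lift2 0) (k + 1))
  | app _ _ iht ihu => exact .app (iht hs k) (ihu hs k)
  | ite _ _ _ ihc iha ihb => exact .ite (ihc hs k) (iha hs k) (ihb hs k)
  | sup p _ _ iht ihu => exact .sup p (iht hs k) (ihu hs k)
  | beta _ _ iht ihu =>
    rw [subst2_subst2 _ _ _ (Nat.zero_le k)]
    exact .beta (iht (hs.lift2 0) (k + 1)) (ihu hs k)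
  | iteOne b _ ih => exact .iteOne _ (ih hs k)
  | iteZero a _ ih => exact .iteZero _ (ih hs k)

theorem to_dev {t s} (h : Par t s) : Par s (dev t) := by
  induction h with
  | var n => exact .var n
  | one => exact .one
  | zero => exact .zero
  | coin => exact .coinStep
  | coinStep => exact .sup _ .zero .one
  | lam _ ih => exact .lam ih
  | @app t _ _ _ ht _ iht ihu =>
    cases t
    case lam t₀ =>
      cases ht
      cases iht with
      | lam iht₀ => exact .beta iht₀ ihu
    all_goals exact .app iht ihu
  | @ite c _ _ _ _ _ hc _ _ ihc iha ihb =>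
    cases c
    case one => cases hc; exact .iteOne _ iha
    case zero => cases hc; exact .iteZero _ ihb
    all_goals exact .ite ihc iha ihb
  | sup p _ _ iht ihu => exact .sup p iht ihu
  | beta _ _ iht ihu => exact iht.subst2 ihu 0
  | iteOne b _ ih => exact ih
  | iteZero a _ ih => exact ih

theorem diamond {t a b} (ha : Par t a) (hb : Par t b) : ∃ c, Par a c ∧ Par b c :=
  ⟨dev t, ha.to_dev, hb.to_dev⟩

end Par

end Tm2

namespace Step2

theorem par {t r} (h : Step2 t r) : Tm2.Par t r := by
  induction h with
  | beta t r => exact .beta (.refl t) (.refl r)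
  | iteOne a b => exact .iteOne _ (.refl a)
  | iteZero a b => exact .iteZero _ (.refl b)
  | coin => exact .coinStep
  | lam _ ih => exact .lam ih
  | appL u _ ih => exact .app ih (.refl u)
  | appR t _ ih => exact .app (.refl t) ih
  | iteC a b _ ih => exact .ite ih (.refl a) (.refl b)
  | iteA c b _ ih => exact .ite (.refl c) ih (.refl b)
  | iteB c a _ ih => exact .ite (.refl c) (.refl a) ih
  | supL p u _ ih => exact .sup p ih (.refl u)
  | supR p t _ ih => exact .sup p (.refl t) ih

theorem reflTransGen_lam {t t'} (h : ReflTransGen Step2 t t') :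
    ReflTransGen Step2 (.lam t) (.lam t') :=
  h.lift Tm2.lam fun _ _ => lam

theorem reflTransGen_app {t t' u u'} (ht : ReflTransGen Step2 t t')
    (hu : ReflTransGen Step2 u u') : ReflTransGen Step2 (.app t u) (.app t' u') :=
  (ht.lift (Tm2.app · u) fun _ _ => appL u).trans
    (hu.lift (Tm2.app t') fun _ _ => appR t')

theorem reflTransGen_ite {c c' a a' b b'} (hc : ReflTransGen Step2 c c')
    (ha : ReflTransGen Step2 a a') (hb : ReflTransGen Step2 b b') :
    ReflTransGen Step2 (.ite c a b) (.ite c' a' b') :=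
  ((hc.lift (Tm2.ite · a b) fun _ _ => iteC a b).trans
    (ha.lift (Tm2.ite c' · b) fun _ _ => iteA c' b)).trans
    (hb.lift (Tm2.ite c' a') fun _ _ => iteB c' a')

theorem reflTransGen_sup (p) {t t' u u'} (ht : ReflTransGen Step2 t t')
    (hu : ReflTransGen Step2 u u') : ReflTransGen Step2 (.sup p t u) (.sup p t' u') :=
  (ht.lift (Tm2.sup p · u) fun _ _ => supL p u).trans
    (hu.lift (Tm2.sup p t') fun _ _ => supR p t')

end Step2

theorem Tm2.Par.reflTransGen_step2 {t r} (h : Tm2.Par t r) : ReflTransGen Step2 t r := by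
  induction h with
  | var | one | zero | coin => rfl
  | coinStep => exact .single .coin
  | lam _ ih => exact Step2.reflTransGen_lam ih
  | app _ _ iht ihu => exact Step2.reflTransGen_app iht ihu
  | ite _ _ _ ihc iha ihb => exact Step2.reflTransGen_ite ihc iha ihb
  | sup p _ _ iht ihu => exact Step2.reflTransGen_sup p iht ihu
  | beta _ _ iht ihu =>
    exact (Step2.reflTransGen_app (Step2.reflTransGen_lam iht) ihu).tail (.beta _ _)
  | iteOne b _ ih => exact .head (.iteOne _ b) ih
  | iteZero a _ ih => exact .head (.iteZero a _) ih

theorem Tm2.reflTransGen_par_eq : ReflTransGen Par = ReflTransGen Step2 :=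
  le_antisymm (reflTransGen_closed fun _ _ => Par.reflTransGen_step2)
    (ReflTransGen.mono fun _ _ => Step2.par)

theorem internalised_confluent {t r₁ r₂ : Tm2}
    (h₁ : Relation.ReflTransGen Step2 t r₁)
    (h₂ : Relation.ReflTransGen Step2 t r₂) :
    ∃ s, Relation.ReflTransGen Step2 r₁ s ∧ Relation.ReflTransGen Step2 r₂ s := by
  rw [← Tm2.reflTransGen_par_eq] at h₁ h₂ ⊢
  refine church_rosser (fun _ _ _ hb hc => ?_) h₁ h₂
  obtain ⟨d, hbd, hcd⟩ := hb.diamond hc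
  exact ⟨d, .single hbd, .single hcd⟩
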